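/- Let a > 0, M > 0, and η > 0. There exists a constant C > 0 such that for all t > 0: ∫₀^t ∫_{−∞}^0 (t−s)^{−1/2} e^{−(y+a(t−s))²/(M(t−s))} · e^{−η|y|} · (1+s)^{−3/2} dy ds ≤ C (1+t)^{−3/2}. -/

import Mathlib

/-!
For `y ≤ 0` and `τ = t - s`, the Gaussian travelling at speed `a` and the source `e^{η y}`
together decay like `e^{-c τ} e^{η y / 2}`: either `y ≤ -a τ / 2`, and half of the source
decay already gives `e^{-η a τ / 4}`, or `y + a τ ≥ a τ / 2`, and the Gaussian gives
`e^{-a² τ / (4 M)}`. Since `1 + t ≤ (1 + s)(1 + τ)`, half of `e^{-c τ}` absorbs the loss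
in replacing `(1 + s)^{-3/2}` by `(1 + t)^{-3/2}`, and the integrand is then dominated by
`(1 + t)^{-3/2}` times a product of the integrable functions `τ^{-1/2} e^{-c τ / 2}` and
`e^{η y / 2}`.
-/

open MeasureTheory Set Real

theorem setIntegral_setIntegral_le_integral_mul_integral {α β : Type*} [MeasurableSpace α]
    [MeasurableSpace β] {μ : Measure α} {ν : Measure β} {S : Set α} {T : Set β}
    (hS : MeasurableSet S) (hT : MeasurableSet T) {F : α → β → ℝ} {g : α → ℝ} {h : β → ℝ}
    (hg : IntegrableOn g S μ) (hh : IntegrableOn h T ν)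
    (hF₀ : ∀ x ∈ S, ∀ y ∈ T, 0 ≤ F x y) (hF : ∀ x ∈ S, ∀ y ∈ T, F x y ≤ g x * h y) :
    ∫ x in S, ∫ y in T, F x y ∂ν ∂μ ≤ (∫ x in S, g x ∂μ) * ∫ y in T, h y ∂ν := by
  have inner_le : ∀ x ∈ S, ∫ y in T, F x y ∂ν ≤ g x * ∫ y in T, h y ∂ν := fun x hx => by
    rw [← integral_const_mul]
    exact integral_mono_of_nonneg (ae_restrict_of_forall_mem hT (hF₀ x hx))
      (hh.const_mul (g x)) (ae_restrict_of_forall_mem hT (hF x hx))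
  rw [← integral_mul_const]
  exact integral_mono_of_nonneg
    (ae_restrict_of_forall_mem hS fun x hx => setIntegral_nonneg hT (hF₀ x hx))
    (hg.mul_const _) (ae_restrict_of_forall_mem hS inner_le)

theorem integrableOn_comp_sub_left_Ioo {E : Type*} [NormedAddCommGroup E] {f : ℝ → E}
    (hf : IntegrableOn f (Ioi 0)) {t : ℝ} (ht : 0 ≤ t) :
    IntegrableOn (fun s => f (t - s)) (Ioo 0 t) := by
  rw [← intervalIntegrable_iff_integrableOn_Ioo_of_le ht]
  have := ((intervalIntegrable_iff_integrableOn_Ioo_of_le ht).2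
    (hf.mono_set Ioo_subset_Ioi_self)).comp_sub_left t
  simpa using this.symm

theorem setIntegral_comp_sub_left_Ioo_le {f : ℝ → ℝ} (hf : IntegrableOn f (Ioi 0))
    (hf₀ : ∀ u ∈ Ioi 0, 0 ≤ f u) {t : ℝ} (ht : 0 ≤ t) :
    ∫ s in Ioo 0 t, f (t - s) ≤ ∫ u in Ioi 0, f u := by
  have reflect : ∫ s in Ioo 0 t, f (t - s) = ∫ u in Ioc 0 t, f u := by
    rw [← integral_Ioc_eq_integral_Ioo, ← intervalIntegral.integral_of_le ht,
      intervalIntegral.integral_comp_sub_left f t, sub_self, sub_zero,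
      intervalIntegral.integral_of_le ht]
  rw [reflect]
  exact setIntegral_mono_set hf (ae_restrict_of_forall_mem measurableSet_Ioi hf₀)
    Ioc_subset_Ioi_self.eventuallyLE

theorem one_add_rpow_le_mul_exp {p b : ℝ} (hp : 0 ≤ p) (hb : 0 < b) :
    ∃ K > 0, ∀ τ ≥ 0, (1 + τ) ^ p ≤ K * exp (b * τ) := by
  set l := min 1 (b / (p + 1))
  have hl : 0 < l := lt_min one_pos (by positivity)
  have hl₁ : l ≤ 1 := min_le_left _ _
  have hlp : l * p ≤ b := by
    calc l * p ≤ b / (p + 1) * (p + 1) := by gcongr; exact min_le_right _ _; linarith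
      _ = b := by field_simp
  refine ⟨l ^ (-p), rpow_pos_of_pos hl _, fun τ hτ => ?_⟩
  -- `l (1 + τ) ≤ 1 + l τ ≤ exp (l τ)`
  have hbase : 1 + τ ≤ l⁻¹ * exp (l * τ) := by
    rw [le_inv_mul_iff₀ hl]
    nlinarith [add_one_le_exp (l * τ)]
  calc (1 + τ) ^ p ≤ (l⁻¹ * exp (l * τ)) ^ p := rpow_le_rpow (by linarith) hbase hp
    _ = l ^ (-p) * exp (l * p * τ) := by
      rw [mul_rpow (by positivity) (exp_pos _).le, inv_rpow hl.le, ← rpow_neg hl.le,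
        ← exp_mul]
      ring_nf
    _ ≤ l ^ (-p) * exp (b * τ) := by gcongr

theorem one_add_rpow_neg_le {p s t : ℝ} (hp : 0 ≤ p) (hs : 0 ≤ s) (hst : s ≤ t) :
    (1 + s) ^ (-p) ≤ (1 + (t - s)) ^ p * (1 + t) ^ (-p) := by
  have hsplit : (1 + t) ^ p ≤ (1 + s) ^ p * (1 + (t - s)) ^ p := by
    rw [← mul_rpow (by linarith) (by linarith)]
    exact rpow_le_rpow (by linarith) (by nlinarith) hp
  rw [rpow_neg (by linarith), rpow_neg (by linarith), ← div_eq_mul_inv,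
    le_div_iff₀ (rpow_pos_of_pos (by linarith) _),
    inv_mul_le_iff₀ (rpow_pos_of_pos (by linarith) _)]
  exact hsplit

theorem exp_neg_sq_div_mul_exp_neg_abs_le {a M η c τ y : ℝ} (ha : 0 ≤ a) (hM : 0 < M)
    (hη : 0 ≤ η) (hτ : 0 < τ) (hy : y ≤ 0) (hca : c ≤ η * a / 4) (hcM : c ≤ a ^ 2 / (4 * M)) :
    exp (-(y + a * τ) ^ 2 / (M * τ)) * exp (-η * |y|) ≤ exp (-(c * τ)) * exp (η / 2 * y) := by
  rw [← exp_add, ← exp_add, exp_le_exp, abs_of_nonpos hy, neg_div]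
  have hgauss : 0 ≤ (y + a * τ) ^ 2 / (M * τ) := by positivity
  rcases le_or_gt y (-(a * τ) / 2) with hfar | hnear
  · have : c * τ ≤ η * a / 4 * τ := by gcongr
    nlinarith
  · have hsq : (a * τ / 2) ^ 2 ≤ (y + a * τ) ^ 2 :=
      pow_le_pow_left₀ (by positivity) (by linarith) 2
    have hdrift : a ^ 2 / (4 * M) * τ ≤ (y + a * τ) ^ 2 / (M * τ) := by
      calc a ^ 2 / (4 * M) * τ = (a * τ / 2) ^ 2 / (M * τ) := by field_simp; ring
        _ ≤ (y + a * τ) ^ 2 / (M * τ) := by gcongr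
    have : c * τ ≤ a ^ 2 / (4 * M) * τ := by gcongr
    nlinarith

theorem excited_integrand_le {a M η c K s t y : ℝ} (ha : 0 ≤ a) (hM : 0 < M) (hη : 0 ≤ η)
    (hca : c ≤ η * a / 4) (hcM : c ≤ a ^ 2 / (4 * M))
    (hK : ∀ τ ≥ 0, (1 + τ) ^ (3/2:ℝ) ≤ K * exp (c / 2 * τ)) (hs : s ∈ Ioo 0 t) (hy : y ≤ 0) :
    (t - s) ^ (-(1/2:ℝ)) * exp (-(y + a * (t - s)) ^ 2 / (M * (t - s))) * exp (-η * |y|) *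
        (1 + s) ^ (-(3/2:ℝ)) ≤
      K * (1 + t) ^ (-(3/2:ℝ)) * ((t - s) ^ (-(1/2:ℝ)) * exp (-(c / 2) * (t - s))) *
        exp (η / 2 * y) := by
  obtain ⟨hs₀, hst⟩ := hs
  have hτ : 0 < t - s := sub_pos.2 hst
  have hweight : 0 ≤ (1 + t) ^ (-(3/2:ℝ)) := rpow_nonneg (by linarith) _
  have hdecay : exp (-(c * (t - s))) * (1 + s) ^ (-(3/2:ℝ)) ≤
      K * (1 + t) ^ (-(3/2:ℝ)) * exp (-(c / 2) * (t - s)) :=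
    calc exp (-(c * (t - s))) * (1 + s) ^ (-(3/2:ℝ))
        ≤ exp (-(c * (t - s))) * ((1 + (t - s)) ^ (3/2:ℝ) * (1 + t) ^ (-(3/2:ℝ))) := by
          gcongr; exact one_add_rpow_neg_le (by norm_num) hs₀.le hst.le
      _ ≤ exp (-(c * (t - s))) * (K * exp (c / 2 * (t - s)) * (1 + t) ^ (-(3/2:ℝ))) := by
          gcongr _ * (?_ * _); exact hK _ hτ.le
      _ = K * (1 + t) ^ (-(3/2:ℝ)) * (exp (-(c * (t - s))) * exp (c / 2 * (t - s))) := by ring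
      _ = K * (1 + t) ^ (-(3/2:ℝ)) * exp (-(c / 2) * (t - s)) := by rw [← exp_add]; ring_nf
  calc _ = (t - s) ^ (-(1/2:ℝ)) * (exp (-(y + a * (t - s)) ^ 2 / (M * (t - s))) *
          exp (-η * |y|)) * (1 + s) ^ (-(3/2:ℝ)) := by ring
    _ ≤ (t - s) ^ (-(1/2:ℝ)) * (exp (-(c * (t - s))) * exp (η / 2 * y)) *
          (1 + s) ^ (-(3/2:ℝ)) := by
        gcongr _ * ?_ * _; exact exp_neg_sq_div_mul_exp_neg_abs_le ha hM hη hτ hy hca hcM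
    _ = (t - s) ^ (-(1/2:ℝ)) * exp (η / 2 * y) *
          (exp (-(c * (t - s))) * (1 + s) ^ (-(3/2:ℝ))) := by ring
    _ ≤ (t - s) ^ (-(1/2:ℝ)) * exp (η / 2 * y) *
          (K * (1 + t) ^ (-(3/2:ℝ)) * exp (-(c / 2) * (t - s))) := by gcongr
    _ = _ := by ring

theorem overcompressive_excited_estimate (a M η : ℝ)
    (ha : 0 < a) (hM : 0 < M) (hη : 0 < η) :
    ∃ C > 0, ∀ t : ℝ, 0 < t →
      (∫ s in Set.Ioo (0:ℝ) t, ∫ y in Set.Iic (0:ℝ),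
          (t - s) ^ (-(1/2:ℝ)) * Real.exp (-(y + a*(t-s))^2 / (M*(t-s))) *
            Real.exp (-η * |y|) * (1 + s) ^ (-(3/2:ℝ))) ≤
        C * (1 + t) ^ (-(3/2:ℝ)) := by
  set c := min (η * a / 4) (a ^ 2 / (4 * M))
  have hc : 0 < c := lt_min (by positivity) (by positivity)
  obtain ⟨K, hK, hKexp⟩ := one_add_rpow_le_mul_exp (p := 3/2) (by norm_num) (half_pos hc)
  set φ : ℝ → ℝ := fun u => u ^ (-(1/2:ℝ)) * exp (-(c / 2) * u)
  have hφ : IntegrableOn φ (Ioi 0) :=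
    (integrableOn_rpow_mul_exp_neg_mul_rpow (s := -(1/2)) (p := 1) (b := c / 2)
      (by norm_num) one_pos (by positivity)).congr_fun (fun u _ => by simp only [φ, rpow_one])
      measurableSet_Ioi
  have hφ₀ : ∀ u ∈ Ioi (0:ℝ), 0 ≤ φ u := fun u hu =>
    mul_nonneg (rpow_nonneg hu.le _) (exp_pos _).le
  have hJ : 0 ≤ ∫ u in Ioi 0, φ u := setIntegral_nonneg measurableSet_Ioi hφ₀
  refine ⟨K * (∫ u in Ioi 0, φ u) * (2 / η) + 1, by positivity, fun t ht => ?_⟩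
  have hweight : 0 < (1 + t) ^ (-(3/2:ℝ)) := rpow_pos_of_pos (by linarith) _
  calc _ ≤ (∫ s in Ioo 0 t, K * (1 + t) ^ (-(3/2:ℝ)) * φ (t - s)) *
        ∫ y in Iic 0, exp (η / 2 * y) :=
      setIntegral_setIntegral_le_integral_mul_integral measurableSet_Ioo measurableSet_Iic
        ((integrableOn_comp_sub_left_Ioo hφ ht.le).const_mul _)
        (integrableOn_exp_mul_Iic (by positivity) 0)
        (fun s hs y _ => by have := sub_pos.2 hs.2; have := hs.1; positivity)
        (fun s hs y hy => excited_integrand_le ha.le hM hη.le (min_le_left _ _)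
          (min_le_right _ _) hKexp hs hy)
    _ ≤ K * (1 + t) ^ (-(3/2:ℝ)) * (∫ u in Ioi 0, φ u) * (2 / η) := by
      rw [integral_const_mul, integral_exp_mul_Iic (by positivity), mul_zero, exp_zero,
        one_div_div]
      gcongr
      exact setIntegral_comp_sub_left_Ioo_le hφ hφ₀ ht.le
    _ ≤ (K * (∫ u in Ioi 0, φ u) * (2 / η) + 1) * (1 + t) ^ (-(3/2:ℝ)) := by nlinarith
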